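/- For the weight vector w given in the context and for all distinct i,j,k ∈ {1,2,3,4} and every L ⊆ {1,2,3,4}∖{k}, the initial form in_w of the edge trinomial p_{L∪{k}} a_{ij|L∖{i,j}} − p_L a_{ij|(L∪{k})∖{i,j}} − a_{ki|L∖{i}} a_{kj|L∖{j}} is not a monomial; equivalently, the minimal w-weight among its three terms is attained by at least two of them. -/

import Mathlib

open MvPolynomial

noncomputable section

/-- The `w`-weight `⟨w, m⟩` of an exponent vector / monomial `m`. -/
def mWeight {σ : Type*} (w : σ → ℝ) (m : σ →₀ ℕ) : ℝ :=
  m.sum fun i e => w i * e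

/-- The initial form `in_w(f)`: the sum of the terms of `f` whose `w`-weight is
minimal among all terms of `f` (min-convention, trivial valuation). -/
def initialForm {σ K : Type*} [CommRing K] (w : σ → ℝ) (f : MvPolynomial σ K) :
    MvPolynomial σ K :=
  (f.support.filter fun m => ∀ m' ∈ f.support, mWeight w m ≤ mWeight w m').sum
    fun m => monomial m (f.coeff m)

/-- A polynomial is a monomial if it equals `c · x^m` for a single exponent
vector `m` and a nonzero coefficient `c`. -/
def IsMonomial {σ K : Type*} [CommRing K] (f : MvPolynomial σ K) : Prop :=
  ∃ (m : σ →₀ ℕ) (c : K), c ≠ 0 ∧ f = monomial m c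

/-- The initial ideal `in_w(I)`: the ideal generated by the initial forms of
all nonzero elements of `I`. -/
def initialIdeal {σ K : Type*} [CommRing K] (w : σ → ℝ)
    (I : Ideal (MvPolynomial σ K)) : Ideal (MvPolynomial σ K) :=
  Ideal.span {g | ∃ h ∈ I, h ≠ 0 ∧ g = initialForm w h}


/-! ### The gaussoid ring on the ground set `{1,2,3,4}` (modelled as `Fin 4`)

Variables: `p_I` for each `I ⊆ Fin 4` (16 variables) and `a_{ij|K}` for each
unordered pair `{i,j} ⊆ Fin 4` and each `K ⊆ Fin 4 \ {i,j}` (24 variables);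
40 variables in total. -/

/-- Index type for the 40 variables: `Sum.inl I` is `p_I`; `Sum.inr ⟨(s,K),_⟩`
is `a_{ij|K}` for the unordered pair `s = {i,j}` (off-diagonal) with
`K` disjoint from `{i,j}`. -/
def GVar : Type :=
  Finset (Fin 4) ⊕
    {t : Sym2 (Fin 4) × Finset (Fin 4) // ¬ t.1.IsDiag ∧ ∀ i ∈ t.1, i ∉ t.2}

/-- The variable `p_I`. -/
def pP (I : Finset (Fin 4)) : MvPolynomial GVar ℚ := X (Sum.inl I)

/-- The variable `a_{ij|K}` (for `i ≠ j` and `K` disjoint from `{i,j}`;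
junk value `0` otherwise). -/
def aP (i j : Fin 4) (K : Finset (Fin 4)) : MvPolynomial GVar ℚ :=
  if h : ¬ (s(i, j) : Sym2 (Fin 4)).IsDiag ∧ ∀ m ∈ (s(i, j) : Sym2 (Fin 4)), m ∉ K
  then X (Sum.inr ⟨(s(i, j), K), h⟩) else 0

/-- The square trinomial `a_{ij|K}² − p_{K∪{i}} p_{K∪{j}} + p_{K∪{i,j}} p_K`. -/
def sqTri (i j : Fin 4) (K : Finset (Fin 4)) : MvPolynomial GVar ℚ :=
  (aP i j K) ^ 2 - pP (insert i K) * pP (insert j K) +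
    pP (insert i (insert j K)) * pP K

/-- The edge trinomial
`p_{L∪{k}} a_{ij|L∖{i,j}} − p_L a_{ij|(L∪{k})∖{i,j}} − a_{ki|L∖{i}} a_{kj|L∖{j}}`. -/
def edgeTri (i j k : Fin 4) (L : Finset (Fin 4)) : MvPolynomial GVar ℚ :=
  pP (insert k L) * aP i j (L \ {i, j}) - pP L * aP i j ((insert k L) \ {i, j}) -
    aP k i (L \ {i}) * aP k j (L \ {j})

/-- The generating set of `T₄`: all square trinomials and all edge trinomials. -/
def gaussoidGens : Set (MvPolynomial GVar ℚ) :=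
  {f | (∃ (i j : Fin 4) (K : Finset (Fin 4)),
          i ≠ j ∧ i ∉ K ∧ j ∉ K ∧ f = sqTri i j K) ∨
       (∃ (i j k : Fin 4) (L : Finset (Fin 4)),
          i ≠ j ∧ i ≠ k ∧ j ≠ k ∧ k ∉ L ∧ f = edgeTri i j k L)}

/-- The weight of the variable `p_I` (indices shifted: `1,2,3,4 ↦ 0,1,2,3`). -/
def wp (I : Finset (Fin 4)) : ℝ :=
  if I = ∅ then 14
  else if I = {0} then 10 else if I = {1} then 6
  else if I = {2} then 8 else if I = {3} then 8
  else if I = {0, 1} then 6 else if I = {0, 2} then 8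
  else if I = {0, 3} then 8 else if I = {1, 2} then 6
  else if I = {1, 3} then 8 else if I = {2, 3} then 8
  else if I = {0, 1, 2} then 0 else if I = {0, 1, 3} then 8
  else if I = {0, 2, 3} then 2 else if I = {1, 2, 3} then 2
  else 6

/-- The weight of the variable `a_{ij|K}` indexed by the pair `s = {i,j}`. -/
def wa (s : Sym2 (Fin 4)) (K : Finset (Fin 4)) : ℝ :=
  if s = s(0, 1) then
    (if K = ∅ then 8 else if K = {2} then 4 else if K = {3} then 10 else 2)
  else if s = s(0, 2) then
    (if K = ∅ then 9 else if K = {1} then 3 else if K = {3} then 5 else 5)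
  else if s = s(0, 3) then
    (if K = ∅ then 9 else if K = {1} then 11 else if K = {2} then 5 else 1)
  else if s = s(1, 2) then
    (if K = ∅ then 7 else if K = {0} then 5 else if K = {3} then 5 else 5)
  else if s = s(1, 3) then
    (if K = ∅ then 7 else if K = {0} then 7 else if K = {2} then 5 else 1)
  else
    (if K = ∅ then 8 else if K = {0} then 6 else if K = {1} then 4 else 4)

/-- The weight vector `w` from the paper (Theorem on valuated gaussoids). -/
def wGauss : GVar → ℝ
  | Sum.inl I => wp I
  | Sum.inr t => wa t.val.1 t.val.2

variable {σ : Type*}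

lemma mWeight_add (w : σ → ℝ) (m m' : σ →₀ ℕ) :
    mWeight w (m + m') = mWeight w m + mWeight w m' := by
  classical
  unfold mWeight
  rw [Finsupp.sum_add_index]
  · intro a _; simp
  · intro a _ b c; push_cast; ring

lemma mWeight_single (w : σ → ℝ) (a : σ) :
    mWeight w (Finsupp.single a 1) = w a := by
  simp [mWeight, Finsupp.sum_single_index]

lemma mWeight_pair (w : σ → ℝ) (a b : σ) :
    mWeight w (Finsupp.single a 1 + Finsupp.single b 1) = w a + w b := by
  rw [mWeight_add, mWeight_single, mWeight_single]

lemma single_add_ne [DecidableEq σ] {a b c d : σ} (h1 : a ≠ c) (h2 : a ≠ d) :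
    Finsupp.single a 1 + Finsupp.single b 1 ≠ Finsupp.single c 1 + Finsupp.single d 1 := by
  intro h
  have := DFunLike.congr_fun h a
  rw [Finsupp.add_apply, Finsupp.add_apply, Finsupp.single_eq_same,
    Finsupp.single_eq_of_ne' (Ne.symm h1), Finsupp.single_eq_of_ne' (Ne.symm h2)] at this
  omega

lemma X_mul_X [DecidableEq σ] (a b : σ) :
    (X a * X b : MvPolynomial σ ℚ) =
      monomial (Finsupp.single a 1 + Finsupp.single b 1) 1 := by
  rw [X, X, monomial_mul, one_mul]

lemma notMono (w : σ → ℝ) (f : MvPolynomial σ ℚ) (m1 m2 : σ →₀ ℕ)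
    (hne : m1 ≠ m2) (h1 : f.coeff m1 ≠ 0) (h2 : f.coeff m2 ≠ 0)
    (heq : mWeight w m1 = mWeight w m2)
    (hmin : ∀ m ∈ f.support, mWeight w m1 ≤ mWeight w m) :
    ¬ IsMonomial (initialForm w f) := by
  classical
  rintro ⟨m, c, hc, hmc⟩
  have hs1 : m1 ∈ f.support := by simpa [mem_support_iff] using h1
  have hs2 : m2 ∈ f.support := by simpa [mem_support_iff] using h2
  set S := f.support.filter fun m => ∀ m' ∈ f.support, mWeight w m ≤ mWeight w m' with hS
  have hm1S : m1 ∈ S := Finset.mem_filter.2 ⟨hs1, hmin⟩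
  have hm2S : m2 ∈ S := Finset.mem_filter.2 ⟨hs2, fun m' hm' => heq ▸ hmin m' hm'⟩
  have key : ∀ x ∈ S, (initialForm w f).coeff x = f.coeff x := by
    intro x hx
    rw [initialForm, ← hS, coeff_sum, Finset.sum_eq_single x]
    · rw [coeff_monomial, if_pos rfl]
    · intro b _ hb; rw [coeff_monomial, if_neg hb]
    · intro hxx; exact absurd hx hxx
  have e1 : (initialForm w f).coeff m1 ≠ 0 := by rw [key m1 hm1S]; exact h1
  have e2 : (initialForm w f).coeff m2 ≠ 0 := by rw [key m2 hm2S]; exact h2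
  rw [hmc, coeff_monomial] at e1 e2
  split_ifs at e1 with q1
  · split_ifs at e2 with q2
    · exact hne (q1.symm.trans q2)
    · exact e2 rfl
  · exact e1 rfl

instance : DecidableEq GVar := by unfold GVar; infer_instance

lemma keyX [DecidableEq σ] (w : σ → ℝ) (a b c d e g : σ)
    (hac : a ≠ c) (had : a ≠ d) (hae : a ≠ e) (hag : a ≠ g)
    (hce : c ≠ e) (hcg : c ≠ g)
    (hw : (w a + w b = w c + w d ∧ w a + w b ≤ w e + w g) ∨
          (w a + w b = w e + w g ∧ w a + w b ≤ w c + w d) ∨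
          (w c + w d = w e + w g ∧ w c + w d ≤ w a + w b)) :
    ¬ IsMonomial (initialForm w
      (X a * X b - X c * X d - X e * X g : MvPolynomial σ ℚ)) := by
  set m1 := Finsupp.single a 1 + Finsupp.single b 1 with hm1
  set m2 := Finsupp.single c 1 + Finsupp.single d 1 with hm2
  set m3 := Finsupp.single e 1 + Finsupp.single g 1 with hm3
  have h12 : m1 ≠ m2 := single_add_ne hac had
  have h13 : m1 ≠ m3 := single_add_ne hae hag
  have h23 : m2 ≠ m3 := single_add_ne hce hcg
  set f : MvPolynomial σ ℚ := X a * X b - X c * X d - X e * X g with hfdef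
  have hf : f = monomial m1 1 - monomial m2 1 - monomial m3 1 := by
    rw [hfdef, X_mul_X, X_mul_X, X_mul_X]
  have c1 : f.coeff m1 = 1 := by
    simp [hf, coeff_monomial, Ne.symm h12, Ne.symm h13, h12.symm, h13.symm]
  have c2 : f.coeff m2 = -1 := by
    simp [hf, coeff_monomial, h12, h23, h12.symm, h23.symm]
  have c3 : f.coeff m3 = -1 := by
    simp [hf, coeff_monomial, h13, h23, h13.symm, h23.symm]
  have hsup : ∀ m ∈ f.support, m = m1 ∨ m = m2 ∨ m = m3 := by
    intro m hm
    by_contra hx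
    push_neg at hx
    obtain ⟨x1, x2, x3⟩ := hx
    rw [mem_support_iff] at hm
    apply hm
    simp [hf, coeff_monomial, Ne.symm x1, Ne.symm x2, Ne.symm x3, x1, x2, x3]
  have w1 : mWeight w m1 = w a + w b := mWeight_pair w a b
  have w2 : mWeight w m2 = w c + w d := mWeight_pair w c d
  have w3 : mWeight w m3 = w e + w g := mWeight_pair w e g
  rcases hw with ⟨he, hl⟩ | ⟨he, hl⟩ | ⟨he, hl⟩
  · refine notMono w f m1 m2 h12 (by rw [c1]; norm_num) (by rw [c2]; norm_num)
      (by rw [w1, w2, he]) ?_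
    intro m hm
    rcases hsup m hm with rfl | rfl | rfl <;> simp only [w1, w2, w3] <;> linarith
  · refine notMono w f m1 m3 h13 (by rw [c1]; norm_num) (by rw [c3]; norm_num)
      (by rw [w1, w3, he]) ?_
    intro m hm
    rcases hsup m hm with rfl | rfl | rfl <;> simp only [w1, w2, w3] <;> linarith
  · refine notMono w f m2 m3 h23 (by rw [c2]; norm_num) (by rw [c3]; norm_num)
      (by rw [w2, w3, he]) ?_
    intro m hm
    rcases hsup m hm with rfl | rfl | rfl <;> simp only [w1, w2, w3] <;> linarith

lemma aP_eq (i j : Fin 4) (K : Finset (Fin 4))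
    (h : ¬ (s(i, j) : Sym2 (Fin 4)).IsDiag ∧ ∀ m ∈ (s(i, j) : Sym2 (Fin 4)), m ∉ K) :
    aP i j K = X (Sum.inr ⟨(s(i, j), K), h⟩) := dif_pos h

set_option maxHeartbeats 4000000

/-- for the weight vector `w` of the paper and all distinct
`i, j, k ∈ Fin 4` and every `L ⊆ Fin 4 ∖ {k}`, the initial form of the edge
trinomial
`p_{L∪{k}} a_{ij|L∖{i,j}} − p_L a_{ij|(L∪{k})∖{i,j}} − a_{ki|L∖{i}} a_{kj|L∖{j}}`
is not a monomial. -/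

theorem stmt_2 :
    ∀ (i j k : Fin 4) (L : Finset (Fin 4)), i ≠ j → i ≠ k → j ≠ k → k ∉ L →
      ¬ IsMonomial (initialForm wGauss (edgeTri i j k L)) := by
  intro i j k L hij hik hjk hkL
  have hL : L ∈ (Finset.univ : Finset (Finset (Fin 4))) := Finset.mem_univ L
  fin_cases i <;> fin_cases j <;> fin_cases k <;>
    first
      | exact absurd rfl hij
      | exact absurd rfl hik
      | exact absurd rfl hjk
      | (fin_cases hL <;>
          first
            | exact absurd (by decide) hkL
            | (rw [edgeTri, pP, pP, aP_eq _ _ _ (by decide), aP_eq _ _ _ (by decide),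
                  aP_eq _ _ _ (by decide)];
               apply keyX <;>
                 first
                   | (unfold GVar; decide)
                   | (simp (config := { decide := true }) only [wGauss, wp, wa]; norm_num)))

end
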